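/- arXiv:2503.14158 — 4 statements merged into one kernel-verified Lean document; each statement's English description precedes it below -/
import Mathlib

section
/- Let λx, λy > 0, θ ∈ ℝ, and let φ : ℝ → ℝ be continuous. Define x(t) = ∫_0^t e^{-λx(t-s)} φ(s) ds, y(t) = ∫_0^t e^{-λy(t-s)} φ(s) ds, z(t) = θ x(t) + (1-θ) y(t), and the path-dependent functional ẑ(t) = ∫_0^t e^{-(λx(1-θ)+λy θ)(t-s)} z(s) ds. Then z is differentiable on [0,∞) and for every t ≥ 0, z'(t) = -(λx θ + λy (1-θ)) z(t) + θ(1-θ)(λy - λx)² ẑ(t) + φ(t). -/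
open MeasureTheory intervalIntegral

/-!
Each of `x`, `y`, `ẑ` is an exponential convolution `∫₀ᵗ e^{-b(t-s)} ψ(s) ds`, which solves
`f' = -b f + ψ`, `f 0 = 0`. Differentiating shows that `x - y` and `(λy - λx) ẑ` solve the same
linear ODE `g' = -μ g + (λy - λx) z` with `μ = λx(1-θ) + λy θ` and both vanish at `0`, so they
coincide. Substituting `x - y = (λy - λx) ẑ` into `z' = θ x' + (1-θ) y'` gives the dynamics.
-/

namespace Real

noncomputable def expConv (b : ℝ) (ψ : ℝ → ℝ) (t : ℝ) : ℝ :=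
  ∫ s in (0:ℝ)..t, exp (-b * (t - s)) * ψ s

@[simp]
lemma expConv_zero_right (b : ℝ) (ψ : ℝ → ℝ) : expConv b ψ 0 = 0 :=
  integral_same

lemma expConv_eq_exp_mul_integral (b : ℝ) (ψ : ℝ → ℝ) (t : ℝ) :
    expConv b ψ t = exp (-b * t) * ∫ s in (0:ℝ)..t, exp (b * s) * ψ s := by
  rw [expConv, ← intervalIntegral.integral_const_mul]
  refine integral_congr fun s _ => ?_
  simp only [← mul_assoc, ← exp_add]
  ring_nf

variable {ψ : ℝ → ℝ}

lemma hasDerivAt_exp_const_mul (c t : ℝ) :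
    HasDerivAt (fun u => exp (c * u)) (c * exp (c * t)) t := by
  simpa [mul_comm] using ((hasDerivAt_id t).const_mul c).exp

lemma hasDerivAt_expConv {b : ℝ} (hψ : Continuous ψ) (t : ℝ) :
    HasDerivAt (expConv b ψ) (-b * expConv b ψ t + ψ t) t := by
  have hc : Continuous fun s => exp (b * s) * ψ s := by fun_prop
  have hint : HasDerivAt (fun u => ∫ s in (0:ℝ)..u, exp (b * s) * ψ s)
      (exp (b * t) * ψ t) t :=
    integral_hasDerivAt_right (hc.intervalIntegrable _ _) (hc.stronglyMeasurableAtFilter _ _)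
      hc.continuousAt
  have hprod := ((hasDerivAt_exp_const_mul (-b) t).mul hint).congr_of_eventuallyEq
    (Filter.Eventually.of_forall (expConv_eq_exp_mul_integral b ψ))
  have hinv : exp (-b * t) * exp (b * t) = 1 := by rw [← exp_add]; simp
  refine hprod.congr_deriv ?_
  rw [expConv_eq_exp_mul_integral]
  linear_combination ψ t * hinv

lemma continuous_expConv (b : ℝ) (hψ : Continuous ψ) : Continuous (expConv b ψ) :=
  continuous_iff_continuousAt.2 fun t => (hasDerivAt_expConv hψ t).continuousAt

lemma eq_zero_of_hasDerivAt_mul_self {c : ℝ} {f : ℝ → ℝ}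
    (hf : ∀ u, HasDerivAt f (c * f u) u) (h0 : f 0 = 0) (t : ℝ) : f t = 0 := by
  have hderiv : ∀ u, HasDerivAt (fun v => exp (-c * v) * f v) 0 u := fun u =>
    ((hasDerivAt_exp_const_mul (-c) u).mul (hf u)).congr_deriv (by ring)
  have hconst := is_const_of_deriv_eq_zero (fun u => (hderiv u).differentiableAt)
    (fun u => (hderiv u).deriv) t 0
  simpa [h0, (exp_pos _).ne'] using hconst

lemma expConv_sub_expConv (a b θ : ℝ) (hψ : Continuous ψ) (t : ℝ) :
    expConv a ψ t - expConv b ψ t =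
      (b - a) * expConv (a * (1 - θ) + b * θ)
        (fun s => θ * expConv a ψ s + (1 - θ) * expConv b ψ s) t := by
  set z := fun s => θ * expConv a ψ s + (1 - θ) * expConv b ψ s
  have hz : Continuous z :=
    (continuous_const.mul (continuous_expConv a hψ)).add
      (continuous_const.mul (continuous_expConv b hψ))
  set μ := a * (1 - θ) + b * θ
  have hdiff : ∀ u, HasDerivAt (fun u => expConv a ψ u - expConv b ψ u - (b - a) * expConv μ z u)
      (-μ * (expConv a ψ u - expConv b ψ u - (b - a) * expConv μ z u)) u := fun u =>
    (((hasDerivAt_expConv hψ u).sub (hasDerivAt_expConv hψ u)).sub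
      ((hasDerivAt_expConv hz u).const_mul (b - a))).congr_deriv (by ring)
  exact sub_eq_zero.1 (eq_zero_of_hasDerivAt_mul_self hdiff (by simp) t)

end Real

theorem two_factor_quintic_Z_path_dependent_dynamics_general
    (lx ly : ℝ) (θ : ℝ)
    (φ : ℝ → ℝ) (hφ : Continuous φ)
    (x y z zhat : ℝ → ℝ)
    (hx : ∀ t, x t = ∫ s in (0:ℝ)..t, Real.exp (-lx * (t - s)) * φ s)
    (hy : ∀ t, y t = ∫ s in (0:ℝ)..t, Real.exp (-ly * (t - s)) * φ s)
    (hz : ∀ t, z t = θ * x t + (1 - θ) * y t)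
    (hzhat : ∀ t, zhat t =
      ∫ s in (0:ℝ)..t, Real.exp (-(lx * (1 - θ) + ly * θ) * (t - s)) * z s) :
    ∀ t ≥ (0:ℝ), HasDerivAt z
      (-(lx * θ + ly * (1 - θ)) * z t + θ * (1 - θ) * (ly - lx) ^ 2 * zhat t + φ t) t := by
  obtain rfl : x = Real.expConv lx φ := funext hx
  obtain rfl : y = Real.expConv ly φ := funext hy
  obtain rfl : z = fun t => θ * Real.expConv lx φ t + (1 - θ) * Real.expConv ly φ t := funext hz
  obtain rfl : zhat = Real.expConv (lx * (1 - θ) + ly * θ) _ := funext hzhat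
  intro t _
  refine (((Real.hasDerivAt_expConv hφ t).const_mul θ).add
    ((Real.hasDerivAt_expConv hφ t).const_mul (1 - θ))).congr_deriv ?_
  linear_combination θ * (1 - θ) * (ly - lx) * Real.expConv_sub_expConv lx ly θ hφ t

/-- Pathwise (smooth-driver) form of the path-dependent dynamics of the factor process
`Z_t = θ X_t + (1-θ) Y_t` of the two-factor Quintic OU model: with
`x(t) = ∫_0^t e^{-λx (t-s)} φ(s) ds`, `y(t) = ∫_0^t e^{-λy (t-s)} φ(s) ds`,
`z = θ x + (1-θ) y` and `ẑ(t) = ∫_0^t e^{-(λx(1-θ)+λy θ)(t-s)} z(s) ds`, the function `z`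
is differentiable on `[0,∞)` with
`z'(t) = -(λx θ + λy (1-θ)) z(t) + θ(1-θ)(λy-λx)² ẑ(t) + φ(t)`. -/
theorem two_factor_quintic_Z_path_dependent_dynamics
    (lx ly : ℝ) (hlx : 0 < lx) (hly : 0 < ly) (θ : ℝ)
    (φ : ℝ → ℝ) (hφ : Continuous φ)
    (x y z zhat : ℝ → ℝ)
    (hx : ∀ t, x t = ∫ s in (0:ℝ)..t, Real.exp (-lx * (t - s)) * φ s)
    (hy : ∀ t, y t = ∫ s in (0:ℝ)..t, Real.exp (-ly * (t - s)) * φ s)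
    (hz : ∀ t, z t = θ * x t + (1 - θ) * y t)
    (hzhat : ∀ t, zhat t =
      ∫ s in (0:ℝ)..t, Real.exp (-(lx * (1 - θ) + ly * θ) * (t - s)) * z s) :
    ∀ t ≥ (0:ℝ), HasDerivAt z
      (-(lx * θ + ly * (1 - θ)) * z t + θ * (1 - θ) * (ly - lx) ^ 2 * zhat t + φ t) t :=
  two_factor_quintic_Z_path_dependent_dynamics_general lx ly θ φ hφ x y z zhat hx hy hz hzhat
end

section
/- Let λx, λy > 0, θ ∈ ℝ, and let φ : ℝ → ℝ be continuous. Define x(t) = ∫_0^t e^{-λx(t-s)} φ(s) ds, y(t) = ∫_0^t e^{-λy(t-s)} φ(s) ds, z(t) = θ x(t) + (1-θ) y(t), and z̃(t) = x(t) - y(t). Then z is differentiable on [0,∞) and for every t ≥ 0, z'(t) = -(λx θ + λy (1-θ)) z(t) + θ(1-θ)(λy - λx) z̃(t) + φ(t). -/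
open MeasureTheory intervalIntegral

/- The exponential convolution `x(t) = ∫_a^t e^{-l(t-s)} φ(s) ds` factors as
`e^{-lt} ∫_a^t e^{ls} φ(s) ds`, so it solves `x' = -l x + φ`. Since `z` is an affine
combination of two such convolutions with the same driver, `z' = θ x' + (1-θ) y'`, and
substituting `x = z + (1-θ) z̃`, `y = z - θ z̃` gives the stated drift. -/

lemma integral_exp_mul_sub_eq_exp_mul_integral (l a t : ℝ) (φ : ℝ → ℝ) :
    ∫ s in a..t, Real.exp (-l * (t - s)) * φ s
      = Real.exp (-l * t) * ∫ s in a..t, Real.exp (l * s) * φ s := by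
  rw [← intervalIntegral.integral_const_mul]
  refine intervalIntegral.integral_congr fun s _ => ?_
  simp only [← mul_assoc, ← Real.exp_add]
  ring_nf

lemma hasDerivAt_integral_exp_mul_sub {φ : ℝ → ℝ} (hφ : Continuous φ) (l a t : ℝ) :
    HasDerivAt (fun t => ∫ s in a..t, Real.exp (-l * (t - s)) * φ s)
      (-l * (∫ s in a..t, Real.exp (-l * (t - s)) * φ s) + φ t) t := by
  have hcont : Continuous fun s => Real.exp (l * s) * φ s := by fun_prop
  have hprimitive : HasDerivAt (fun u => ∫ s in a..u, Real.exp (l * s) * φ s)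
      (Real.exp (l * t) * φ t) t :=
    integral_hasDerivAt_right (hcont.intervalIntegrable _ _)
      (hcont.stronglyMeasurableAtFilter _ _) hcont.continuousAt
  have hexp : HasDerivAt (fun u => Real.exp (-l * u)) (Real.exp (-l * t) * -l) t := by
    simpa using ((hasDerivAt_id t).const_mul (-l)).exp
  simp only [integral_exp_mul_sub_eq_exp_mul_integral l a]
  refine (hexp.mul hprimitive).congr_deriv ?_
  rw [← mul_assoc, ← Real.exp_add, neg_mul, neg_add_cancel, Real.exp_zero]
  ring

theorem two_factor_quintic_Z_dynamics_via_spread_general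
    (lx ly : ℝ) (θ : ℝ)
    (φ : ℝ → ℝ) (hφ : Continuous φ)
    (x y z ztilde : ℝ → ℝ)
    (hx : ∀ t, x t = ∫ s in (0:ℝ)..t, Real.exp (-lx * (t - s)) * φ s)
    (hy : ∀ t, y t = ∫ s in (0:ℝ)..t, Real.exp (-ly * (t - s)) * φ s)
    (hz : ∀ t, z t = θ * x t + (1 - θ) * y t)
    (hztilde : ∀ t, ztilde t = x t - y t) :
    ∀ t ≥ (0:ℝ), HasDerivAt z
      (-(lx * θ + ly * (1 - θ)) * z t + θ * (1 - θ) * (ly - lx) * ztilde t + φ t) t := by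
  intro t _
  have hxd : HasDerivAt x (-lx * x t + φ t) t := by
    rw [funext hx]; exact hasDerivAt_integral_exp_mul_sub hφ lx 0 t
  have hyd : HasDerivAt y (-ly * y t + φ t) t := by
    rw [funext hy]; exact hasDerivAt_integral_exp_mul_sub hφ ly 0 t
  have hzd : HasDerivAt z (θ * (-lx * x t + φ t) + (1 - θ) * (-ly * y t + φ t)) t := by
    rw [funext hz]; exact (hxd.const_mul θ).add (hyd.const_mul (1 - θ))
  refine hzd.congr_deriv ?_
  rw [hz t, hztilde t]
  ring

/-- Pathwise form of the intermediate dynamics of `Z = θ X + (1-θ) Y` in terms of the spread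
`Z̃ = X - Y` in the two-factor Quintic OU model: with
`x(t) = ∫_0^t e^{-λx (t-s)} φ(s) ds`, `y(t) = ∫_0^t e^{-λy (t-s)} φ(s) ds`,
`z = θ x + (1-θ) y` and `z̃ = x - y`, the function `z` is differentiable on `[0,∞)` with
`z'(t) = -(λx θ + λy (1-θ)) z(t) + θ(1-θ)(λy - λx) z̃(t) + φ(t)`. -/
theorem two_factor_quintic_Z_dynamics_via_spread
    (lx ly : ℝ) (hlx : 0 < lx) (hly : 0 < ly) (θ : ℝ)
    (φ : ℝ → ℝ) (hφ : Continuous φ)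
    (x y z ztilde : ℝ → ℝ)
    (hx : ∀ t, x t = ∫ s in (0:ℝ)..t, Real.exp (-lx * (t - s)) * φ s)
    (hy : ∀ t, y t = ∫ s in (0:ℝ)..t, Real.exp (-ly * (t - s)) * φ s)
    (hz : ∀ t, z t = θ * x t + (1 - θ) * y t)
    (hztilde : ∀ t, ztilde t = x t - y t) :
    ∀ t ≥ (0:ℝ), HasDerivAt z
      (-(lx * θ + ly * (1 - θ)) * z t + θ * (1 - θ) * (ly - lx) * ztilde t + φ t) t :=
  two_factor_quintic_Z_dynamics_via_spread_general lx ly θ φ hφ x y z ztilde hx hy hz hztilde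
end

section
/- Let λx, λy > 0, θ ∈ ℝ, and let φ : ℝ → ℝ be continuous. Define x(t) = ∫_0^t e^{-λx(t-s)} φ(s) ds, y(t) = ∫_0^t e^{-λy(t-s)} φ(s) ds, and z(t) = θ x(t) + (1-θ) y(t). Then for every t ≥ 0, x(t) - y(t) = (λy - λx) ∫_0^t e^{-(λx(1-θ) + λy θ)(t-s)} z(s) ds. -/
/-!
Both `x - y` and `t ↦ (λy - λx) ∫₀ᵗ e^{-μ(t-s)} z(s) ds`, with `μ = λx(1-θ) + λy θ`, solve the
linear ODE `w' = -μ w + (λy - λx) z` with `w(0) = 0`: indeed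
`-μ (x - y) + (λy - λx)(θ x + (1-θ) y) = -λx x + λy y = x' - y'`.
Multiplying by the integrating factor `e^{μ t}` shows that such a solution is unique.
-/

open MeasureTheory intervalIntegral

noncomputable def expConv (l : ℝ) (φ : ℝ → ℝ) (t : ℝ) : ℝ :=
  ∫ s in (0:ℝ)..t, Real.exp (-l * (t - s)) * φ s

lemma expConv_apply_zero (l : ℝ) (φ : ℝ → ℝ) : expConv l φ 0 = 0 := by
  simp [expConv]

lemma expConv_eq_exp_mul_integral (l : ℝ) (φ : ℝ → ℝ) (t : ℝ) :
    expConv l φ t = Real.exp (-l * t) * ∫ s in (0:ℝ)..t, Real.exp (l * s) * φ s := by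
  rw [expConv, ← intervalIntegral.integral_const_mul]
  refine integral_congr fun s _ => ?_
  rw [← mul_assoc, ← Real.exp_add]
  ring_nf

lemma expConv_const_mul (l c : ℝ) (φ : ℝ → ℝ) (t : ℝ) :
    expConv l (fun s => c * φ s) t = c * expConv l φ t := by
  rw [expConv, expConv, ← intervalIntegral.integral_const_mul]
  exact integral_congr fun s _ => by ring

lemma hasDerivAt_exp_const_mul (μ t : ℝ) :
    HasDerivAt (fun u => Real.exp (μ * u)) (Real.exp (μ * t) * μ) t := by
  simpa using ((hasDerivAt_id t).const_mul μ).exp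

lemma hasDerivAt_expConv (l : ℝ) {φ : ℝ → ℝ} (hφ : Continuous φ) (t : ℝ) :
    HasDerivAt (expConv l φ) (-l * expConv l φ t + φ t) t := by
  have hI : HasDerivAt (fun u => ∫ s in (0:ℝ)..u, Real.exp (l * s) * φ s)
      (Real.exp (l * t) * φ t) t :=
    (((Real.continuous_exp.comp (continuous_const_mul l)).mul hφ).integral_hasStrictDerivAt
      0 t).hasDerivAt
  have h := (hasDerivAt_exp_const_mul (-l) t).fun_mul hI
  rw [← funext (expConv_eq_exp_mul_integral l φ)] at h
  refine h.congr_deriv ?_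
  have hexp : Real.exp (-l * t) * Real.exp (l * t) = 1 := by rw [← Real.exp_add]; simp
  rw [expConv_eq_exp_mul_integral]
  linear_combination φ t * hexp

lemma eq_expConv_of_hasDerivAt {μ : ℝ} {w ψ : ℝ → ℝ} (hψ : Continuous ψ)
    (hw : ∀ t, HasDerivAt w (-μ * w t + ψ t) t) (hw0 : w 0 = 0) (t : ℝ) :
    w t = expConv μ ψ t := by
  have hderiv : ∀ s, HasDerivAt (fun u => Real.exp (μ * u) * w u)
      (Real.exp (μ * s) * ψ s) s := fun s => by
    refine ((hasDerivAt_exp_const_mul μ s).fun_mul (hw s)).congr_deriv ?_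
    ring
  have hint : IntervalIntegrable (fun s => Real.exp (μ * s) * ψ s) volume 0 t :=
    ((Real.continuous_exp.comp (continuous_const_mul μ)).mul hψ).intervalIntegrable 0 t
  have hFTC := integral_eq_sub_of_hasDerivAt (fun s _ => hderiv s) hint
  rw [hw0, mul_zero, sub_zero] at hFTC
  rw [expConv_eq_exp_mul_integral, hFTC, ← mul_assoc, ← Real.exp_add]
  simp

lemma continuous_expConv (l : ℝ) {φ : ℝ → ℝ} (hφ : Continuous φ) :
    Continuous (expConv l φ) :=
  continuous_iff_continuousAt.2 fun t => (hasDerivAt_expConv l hφ t).continuousAt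

theorem two_factor_quintic_spread_integral_representation_general
    (lx ly : ℝ) (θ : ℝ)
    (φ : ℝ → ℝ) (hφ : Continuous φ)
    (x y z : ℝ → ℝ)
    (hx : ∀ t, x t = ∫ s in (0:ℝ)..t, Real.exp (-lx * (t - s)) * φ s)
    (hy : ∀ t, y t = ∫ s in (0:ℝ)..t, Real.exp (-ly * (t - s)) * φ s)
    (hz : ∀ t, z t = θ * x t + (1 - θ) * y t) :
    ∀ t ≥ (0:ℝ), x t - y t =
      (ly - lx) * ∫ s in (0:ℝ)..t, Real.exp (-(lx * (1 - θ) + ly * θ) * (t - s)) * z s := by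
  intro t _
  obtain rfl : x = expConv lx φ := funext hx
  obtain rfl : y = expConv ly φ := funext hy
  obtain rfl : z = fun t => θ * expConv lx φ t + (1 - θ) * expConv ly φ t := funext hz
  have hz_cont : Continuous fun t => θ * expConv lx φ t + (1 - θ) * expConv ly φ t := by
    have := continuous_expConv lx hφ
    have := continuous_expConv ly hφ
    fun_prop
  have hspread : ∀ s, HasDerivAt (fun u => expConv lx φ u - expConv ly φ u)
      (-(lx * (1 - θ) + ly * θ) * (expConv lx φ s - expConv ly φ s) +
        (ly - lx) * (θ * expConv lx φ s + (1 - θ) * expConv ly φ s)) s := fun s => by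
    refine ((hasDerivAt_expConv lx hφ s).sub (hasDerivAt_expConv ly hφ s)).congr_deriv ?_
    ring
  rw [eq_expConv_of_hasDerivAt (hz_cont.const_mul (ly - lx)) hspread
    (by simp [expConv_apply_zero]) t, expConv_const_mul]
  rfl

/-- Closed-form integral representation of the spread process `Z̃ = X - Y` in terms of the
combined factor `Z = θ X + (1-θ) Y` in the pathwise form of the two-factor Quintic OU model:
with `x(t) = ∫_0^t e^{-λx (t-s)} φ(s) ds`, `y(t) = ∫_0^t e^{-λy (t-s)} φ(s) ds` and
`z = θ x + (1-θ) y`, for every `t ≥ 0` one has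
`x(t) - y(t) = (λy - λx) ∫_0^t e^{-(λx(1-θ) + λy θ)(t-s)} z(s) ds`. -/
theorem two_factor_quintic_spread_integral_representation
    (lx ly : ℝ) (hlx : 0 < lx) (hly : 0 < ly) (θ : ℝ)
    (φ : ℝ → ℝ) (hφ : Continuous φ)
    (x y z : ℝ → ℝ)
    (hx : ∀ t, x t = ∫ s in (0:ℝ)..t, Real.exp (-lx * (t - s)) * φ s)
    (hy : ∀ t, y t = ∫ s in (0:ℝ)..t, Real.exp (-ly * (t - s)) * φ s)
    (hz : ∀ t, z t = θ * x t + (1 - θ) * y t) :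
    ∀ t ≥ (0:ℝ), x t - y t =
      (ly - lx) * ∫ s in (0:ℝ)..t, Real.exp (-(lx * (1 - θ) + ly * θ) * (t - s)) * z s :=
  two_factor_quintic_spread_integral_representation_general lx ly θ φ hφ x y z hx hy hz
end

section
/- Let (Ω, F, P) be a probability space, m ⊆ F a sub-σ-algebra, and X, Y : Ω → ℝ m-measurable random variables with E[|X|^10] < ∞ and E[|Y|^10] < ∞. Let G : Ω → ℝ be a centered Gaussian random variable with variance s² whose generated σ-algebra is independent of m, let a, b ∈ ℝ, and set H = aX + bY. Let α_0,…,α_5 ∈ ℝ, p(z) = Σ_{k=0}^{5} α_k z^k, α_k = 0 for k > 5, and (α*α)_k = Σ_{j=0}^{k} α_j α_{k-j}. Then E[p(H+G)² | m] = Σ_{k=0}^{10} (α*α)_k Σ_{ℓ=0}^{k} C(k,ℓ) H^ℓ m_{k-ℓ}(s²) almost surely, where C(k,ℓ) = k!/((k-ℓ)! ℓ!) and m_j(s²) = 0 if j is odd and m_j(s²) = (s²)^{j/2} · j!/(2^{j/2} (j/2)!) if j is even. -/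
open MeasureTheory ProbabilityTheory Real Finset
open scoped NNReal Nat

/-!
Conditionally on `m`, `H` is a constant and `G` keeps its law `N(0, s²)`. Expanding
`p(H + G)² = ∑ₖ (α * α)ₖ (H + G)ᵏ` and then each `(H + G)ᵏ` binomially, every term `H^ℓ G^(k-ℓ)`
has conditional expectation `H^ℓ E[G^(k-ℓ)]`. Integration by parts against the Gaussian density
gives `E[G^(n+2)] = (n + 1) s² E[G^n]`, whence the moments `m_j(s²)`.
-/

lemma integrable_pow_mul_exp_neg_mul_sq {b : ℝ} (hb : 0 < b) (n : ℕ) :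
    Integrable fun x : ℝ ↦ x ^ n * exp (-b * x ^ 2) := by
  simpa [rpow_natCast] using
    integrable_rpow_mul_exp_neg_mul_sq hb (s := n) (by linarith [n.cast_nonneg (α := ℝ)])

lemma integral_pow_add_two_mul_exp_neg_mul_sq {b : ℝ} (hb : 0 < b) (n : ℕ) :
    ∫ x : ℝ, x ^ (n + 2) * exp (-b * x ^ 2) =
      (n + 1) / (2 * b) * ∫ x : ℝ, x ^ n * exp (-b * x ^ 2) := by
  have hderiv : ∀ x : ℝ, HasDerivAt (fun x ↦ -(2 * b)⁻¹ * (x ^ (n + 1) * exp (-b * x ^ 2)))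
      (x ^ (n + 2) * exp (-b * x ^ 2) - (n + 1) / (2 * b) * (x ^ n * exp (-b * x ^ 2))) x := by
    intro x
    have hexp := ((hasDerivAt_pow 2 x).const_mul (-b)).exp
    refine (((hasDerivAt_pow (n + 1) x).mul hexp).const_mul (-(2 * b)⁻¹)).congr_deriv ?_
    field_simp
    push_cast
    ring
  have hint := integrable_pow_mul_exp_neg_mul_sq hb
  have hzero := integral_eq_zero_of_hasDerivAt_of_integrable hderiv
    ((hint _).sub ((hint n).const_mul _)) ((hint _).const_mul _)
  rw [integral_sub (hint _) ((hint n).const_mul _), integral_const_mul] at hzero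
  linarith

lemma integral_pow_gaussianReal_eq_integral_mul_exp {v : ℝ≥0} (hv : v ≠ 0) (n : ℕ) :
    ∫ x, x ^ n ∂gaussianReal 0 v =
      (√(2 * π * v))⁻¹ * ∫ x : ℝ, x ^ n * exp (-(2 * v : ℝ)⁻¹ * x ^ 2) := by
  rw [integral_gaussianReal_eq_integral_smul hv, ← integral_const_mul]
  congr with x
  rw [gaussianPDFReal, smul_eq_mul, sub_zero, neg_div, div_eq_inv_mul, neg_mul]
  ring

lemma integral_pow_add_two_gaussianReal (v : ℝ≥0) (n : ℕ) :
    ∫ x, x ^ (n + 2) ∂gaussianReal 0 v = (n + 1) * v * ∫ x, x ^ n ∂gaussianReal 0 v := by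
  rcases eq_or_ne v 0 with rfl | hv
  · simp [gaussianReal_zero_var]
  rw [integral_pow_gaussianReal_eq_integral_mul_exp hv,
    integral_pow_gaussianReal_eq_integral_mul_exp hv,
    integral_pow_add_two_mul_exp_neg_mul_sq (by positivity)]
  field_simp

lemma integral_pow_gaussianReal (v : ℝ≥0) (n : ℕ) :
    ∫ x, x ^ n ∂gaussianReal 0 v =
      if Even n then (v : ℝ) ^ (n / 2) * n ! / (2 ^ (n / 2) * (n / 2)!) else 0 := by
  induction n using Nat.twoStepInduction with
  | zero => simp
  | one => simp [integral_id_gaussianReal]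
  | more n ih _ =>
    rw [integral_pow_add_two_gaussianReal, ih]
    by_cases hn : Even n
    · obtain ⟨k, rfl⟩ := hn
      rw [if_pos ⟨k, rfl⟩, if_pos ⟨k + 1, by ring⟩, show (k + k + 2) / 2 = k + 1 by omega,
        show (k + k) / 2 = k by omega, show k + k + 2 = (k + k + 1) + 1 by ring,
        Nat.factorial_succ, Nat.factorial_succ, Nat.factorial_succ]
      push_cast
      field_simp
      ring
    · rw [if_neg hn, if_neg (by simpa [Nat.even_add] using hn), mul_zero]

lemma sq_sum_range_mul_pow {R : Type*} [CommRing R] {n : ℕ} (α : ℕ → R)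
    (hα : ∀ k > n, α k = 0) (z : R) :
    (∑ k ∈ range (n + 1), α k * z ^ k) ^ 2 =
      ∑ k ∈ range (2 * n + 1), (∑ j ∈ range (k + 1), α j * α (k - j)) * z ^ k := by
  open Polynomial in
  set p : R[X] := ∑ k ∈ range (n + 1), C (α k) * X ^ k
  have hcoeff : ∀ j, p.coeff j = α j := by
    intro j
    simp only [p, finsetSum_coeff, coeff_C_mul, coeff_X_pow, mul_ite, mul_one, mul_zero,
      sum_ite_eq, mem_range]
    split_ifs with hj
    · rfl
    · exact (hα j (by omega)).symm
  have hdeg : (p ^ 2).natDegree < 2 * n + 1 := by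
    have : p.natDegree ≤ n := natDegree_sum_le_of_forall_le _ _ fun k hk ↦
      (natDegree_C_mul_X_pow_le _ _).trans (Nat.lt_succ_iff.mp (mem_range.mp hk))
    linarith [natDegree_pow_le (p := p) (n := 2)]
  calc (∑ k ∈ range (n + 1), α k * z ^ k) ^ 2 = (p ^ 2).eval z := by
        simp [p, eval_finsetSum]
    _ = _ := by
        rw [eval_eq_sum_range' hdeg]
        refine sum_congr rfl fun k _ ↦ ?_
        rw [sq, coeff_mul, Nat.sum_antidiagonal_eq_sum_range_succ_mk]
        simp only [hcoeff]

section Moments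

variable {β : Type*} {mβ : MeasurableSpace β} {μ : Measure β}

lemma memLp_of_integrable_abs_pow {f : β → ℝ} (hf : AEStronglyMeasurable f μ) {n : ℕ}
    (hn : n ≠ 0) (h : Integrable (fun x ↦ |f x| ^ n) μ) : MemLp f n μ :=
  (integrable_norm_rpow_iff hf (by simpa) (by simp)).1 (by simpa [rpow_natCast] using h)

lemma MeasureTheory.MemLp.integrable_pow_of_le [IsFiniteMeasure μ] {f : β → ℝ} {n k : ℕ}
    (hf : MemLp f n μ) (hk : k ≤ n) : Integrable (fun x ↦ f x ^ k) μ :=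
  (integrable_norm_iff (hf.1.pow k)).1 <| by
    simpa [norm_pow] using integrable_norm_pow_of_le hf.1 hk hf.integrable_norm_pow'

end Moments

lemma integrable_pow_gaussianReal (μ : ℝ) (v : ℝ≥0) (n : ℕ) :
    Integrable (fun x ↦ x ^ n) (gaussianReal μ v) := by
  simpa using (memLp_id_gaussianReal' (μ := μ) (v := v) n (by simp)).integrable_pow_of_le le_rfl

section CondExp

variable {Ω : Type*} {mΩ : MeasurableSpace Ω} {P : Measure Ω} {m m' : MeasurableSpace Ω}

lemma ProbabilityTheory.Indep.indepFun_of_measurable {β γ : Type*} [MeasurableSpace β]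
    [MeasurableSpace γ] (hindep : Indep m m' P) {f : Ω → β} {g : Ω → γ}
    (hf : Measurable[m] f) (hg : Measurable[m'] g) : IndepFun f g P := by
  rw [IndepFun_iff_Indep]
  exact indep_of_indep_of_le_right (indep_of_indep_of_le_left hindep hf.comap_le) hg.comap_le

variable [IsFiniteMeasure P]

lemma condExp_mul_of_indep (hm : m ≤ mΩ) (hm' : m' ≤ mΩ) (hindep : Indep m' m P)
    {f g : Ω → ℝ} (hf : StronglyMeasurable[m] f) (hg : StronglyMeasurable[m'] g)
    (hfi : Integrable f P) (hgi : Integrable g P) :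
    P[f * g | m] =ᵐ[P] fun ω ↦ f ω * P[g] := by
  have hfg := (hindep.symm.indepFun_of_measurable hf.measurable hg.measurable).integrable_mul
    hfi hgi
  filter_upwards [condExp_mul_of_stronglyMeasurable_left hf hfg hgi,
    condExp_indep_eq hm' hm hg hindep] with ω h1 h2
  rw [h1, Pi.mul_apply, h2]

lemma condExp_finsetSum_mul_of_indep {ι : Type*} (hm : m ≤ mΩ) (hm' : m' ≤ mΩ)
    (hindep : Indep m' m P) (s : Finset ι) {f g : ι → Ω → ℝ}
    (hf : ∀ i ∈ s, StronglyMeasurable[m] (f i)) (hg : ∀ i ∈ s, StronglyMeasurable[m'] (g i))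
    (hfi : ∀ i ∈ s, Integrable (f i) P) (hgi : ∀ i ∈ s, Integrable (g i) P) :
    P[∑ i ∈ s, f i * g i | m] =ᵐ[P] fun ω ↦ ∑ i ∈ s, f i ω * P[g i] := by
  have hterm : ∀ᵐ ω ∂P, ∀ i ∈ s, P[f i * g i | m] ω = f i ω * P[g i] :=
    (Filter.eventually_all_finset s).2 fun i hi ↦
      condExp_mul_of_indep hm hm' hindep (hf i hi) (hg i hi) (hfi i hi) (hgi i hi)
  have hint : ∀ i ∈ s, Integrable (f i * g i) P := fun i hi ↦
    (hindep.symm.indepFun_of_measurable (hf i hi).measurable (hg i hi).measurable).integrable_mul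
      (hfi i hi) (hgi i hi)
  filter_upwards [condExp_finsetSum hint m, hterm] with ω h1 h2
  rw [h1, Finset.sum_apply]
  exact sum_congr rfl h2

lemma condExp_sum_mul_add_pow_of_indep (hm : m ≤ mΩ) {H G : Ω → ℝ} (hH : Measurable[m] H)
    (hG : Measurable[mΩ] G) (hindep : Indep (MeasurableSpace.comap G Real.measurableSpace) m P)
    (N : ℕ) (c : ℕ → ℝ) (hHi : ∀ ℓ < N, Integrable (fun ω ↦ H ω ^ ℓ) P)
    (hGi : ∀ j < N, Integrable (fun ω ↦ G ω ^ j) P) :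
    P[fun ω ↦ ∑ k ∈ range N, c k * (H ω + G ω) ^ k | m] =ᵐ[P]
      fun ω ↦ ∑ k ∈ range N, c k *
        ∑ ℓ ∈ range (k + 1), (k.choose ℓ : ℝ) * H ω ^ ℓ * P[fun ω ↦ G ω ^ (k - ℓ)] := by
  set s := (range N).sigma fun k ↦ range (k + 1)
  have hs : ∀ i ∈ s, i.2 < N ∧ i.1 - i.2 < N := fun i hi ↦ by
    simp only [s, mem_sigma, mem_range] at hi
    omega
  have hexpand : (fun ω ↦ ∑ k ∈ range N, c k * (H ω + G ω) ^ k) =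
      ∑ i ∈ s, (fun ω ↦ c i.1 * i.1.choose i.2 * H ω ^ i.2) * fun ω ↦ G ω ^ (i.1 - i.2) := by
    ext ω
    simp only [Finset.sum_apply, Pi.mul_apply, s, sum_sigma, add_pow, mul_sum]
    exact sum_congr rfl fun k _ ↦ sum_congr rfl fun ℓ _ ↦ by ring
  have hGm : Measurable[MeasurableSpace.comap G Real.measurableSpace] G := comap_measurable G
  rw [hexpand]
  filter_upwards [condExp_finsetSum_mul_of_indep hm hG.comap_le hindep s
    (fun i _ ↦ ((hH.pow_const _).const_mul _).stronglyMeasurable)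
    (fun i _ ↦ (hGm.pow_const _).stronglyMeasurable)
    (fun i hi ↦ (hHi _ (hs i hi).1).const_mul _) (fun i hi ↦ hGi _ (hs i hi).2)] with ω h
  rw [h, sum_sigma]
  exact sum_congr rfl fun k _ ↦ by rw [mul_sum]; exact sum_congr rfl fun ℓ _ ↦ by ring

end CondExp

/-- Explicit conditional expectation of the squared quintic polynomial volatility factor
given the Markovian decomposition `Z_s = H_t^s + G_t^s` of the two-factor Quintic OU model:
with `H = aX + bY` built from `m`-measurable `X, Y` having finite tenth moments, and `G` a
centered Gaussian with variance `s²` independent of `m`,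
`E[p(H+G)² | m] = Σ_{k=0}^{10} (α*α)_k Σ_{ℓ=0}^{k} C(k,ℓ) H^ℓ m_{k-ℓ}(s²)` a.s.,
where `m_j(s²)` is the `j`-th centered Gaussian moment. -/
theorem condexp_sq_quintic_polynomial_markovian_decomposition
    {Ω : Type*} {F : MeasurableSpace Ω} (P : Measure Ω) [IsProbabilityMeasure P]
    (m : MeasurableSpace Ω) (hm : m ≤ F)
    (X Y : Ω → ℝ) (hX : Measurable[m] X) (hY : Measurable[m] Y)
    (hX10 : Integrable (fun ω => |X ω| ^ 10) P)
    (hY10 : Integrable (fun ω => |Y ω| ^ 10) P)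
    (G : Ω → ℝ) (hG : Measurable[F] G) (s : ℝ)
    (hlaw : @Measure.map Ω ℝ F Real.measurableSpace G P = gaussianReal 0 (s ^ 2).toNNReal)
    (hindep : Indep (MeasurableSpace.comap G Real.measurableSpace) m P)
    (a b : ℝ) (H : Ω → ℝ) (hH : ∀ ω, H ω = a * X ω + b * Y ω)
    (α : ℕ → ℝ) (hα : ∀ k > 5, α k = 0) :
    P[(fun ω => (∑ k ∈ Finset.range 6, α k * (H ω + G ω) ^ k) ^ 2)|m] =ᵐ[P]
      fun ω => ∑ k ∈ Finset.range 11,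
        (∑ j ∈ Finset.range (k + 1), α j * α (k - j)) *
        ∑ ℓ ∈ Finset.range (k + 1),
          (k.choose ℓ : ℝ) * H ω ^ ℓ *
          (if Even (k - ℓ) then
              (s ^ 2) ^ ((k - ℓ) / 2) * (Nat.factorial (k - ℓ)) /
                (2 ^ ((k - ℓ) / 2) * Nat.factorial ((k - ℓ) / 2))
            else 0) := by
  have hHeq : H = fun ω ↦ a * X ω + b * Y ω := funext hH
  have hHm : Measurable[m] H := hHeq ▸ (hX.const_mul a).add (hY.const_mul b)
  have hXL := memLp_of_integrable_abs_pow (hX.mono hm le_rfl).aestronglyMeasurable (by simp) hX10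
  have hYL := memLp_of_integrable_abs_pow (hY.mono hm le_rfl).aestronglyMeasurable (by simp) hY10
  have hH10 : MemLp H (10 : ℕ) P := hHeq ▸ (hXL.const_mul a).add (hYL.const_mul b)
  have hGlaw : HasLaw G (gaussianReal 0 (s ^ 2).toNNReal) P := ⟨hG.aemeasurable, hlaw⟩
  have hGint (j : ℕ) : Integrable (fun ω ↦ G ω ^ j) P := by
    refine (integrable_map_measure (measurable_id.pow_const j).aestronglyMeasurable
      hG.aemeasurable).1 ?_
    rw [hlaw]
    exact integrable_pow_gaussianReal _ _ j
  have hGmom (j : ℕ) : ∫ ω, G ω ^ j ∂P = ∫ x, x ^ j ∂gaussianReal 0 (s ^ 2).toNNReal :=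
    hGlaw.integral_comp (f := fun x ↦ x ^ j) (measurable_id.pow_const j).aestronglyMeasurable
  have hsq : (fun ω ↦ (∑ k ∈ range 6, α k * (H ω + G ω) ^ k) ^ 2) = fun ω ↦
      ∑ k ∈ range 11, (∑ j ∈ range (k + 1), α j * α (k - j)) * (H ω + G ω) ^ k :=
    funext fun ω ↦ sq_sum_range_mul_pow (n := 5) α hα _
  rw [hsq]
  filter_upwards [condExp_sum_mul_add_pow_of_indep hm hHm hG hindep 11
    (fun k ↦ ∑ j ∈ range (k + 1), α j * α (k - j))
    (fun ℓ hℓ ↦ hH10.integrable_pow_of_le (by omega)) (fun j _ ↦ hGint j)] with ω h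
  simp only [h, hGmom, integral_pow_gaussianReal, coe_toNNReal _ (sq_nonneg s)]
end
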